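/- There exist infinitely many pairwise nonequivalent sets {a,b,c,d} of four distinct nonzero perfect squares (hence D(0)-quadruples) such that there exists a nonzero integer n2 for which {a,b,c,d} is also a D(n2)-quadruple. -/
import Mathlib


def IsDQuadruple (a b c d n : ℤ) : Prop :=
  a ≠ b ∧ a ≠ c ∧ a ≠ d ∧ b ≠ c ∧ b ≠ d ∧ c ≠ d ∧
  a ≠ 0 ∧ b ≠ 0 ∧ c ≠ 0 ∧ d ≠ 0 ∧
  (∃ x : ℤ, a * b + n = x ^ 2) ∧ (∃ x : ℤ, a * c + n = x ^ 2) ∧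
  (∃ x : ℤ, a * d + n = x ^ 2) ∧ (∃ x : ℤ, b * c + n = x ^ 2) ∧
  (∃ x : ℤ, b * d + n = x ^ 2) ∧ (∃ x : ℤ, c * d + n = x ^ 2)

/-- Two quadruples (as finite sets of integers) are equivalent if one is obtained
from the other by scaling with a nonzero rational number. -/
def EquivQuad (s t : Finset ℤ) : Prop :=
  ∃ u : ℚ, u ≠ 0 ∧
    (fun a : ℤ => (a : ℚ) * u) '' (s : Set ℤ) = (fun a : ℤ => (a : ℚ)) '' (t : Set ℤ)

def qa (t : ℤ) : ℤ := (15*(t^2-1))^2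
def qb (t : ℤ) : ℤ := (72*t)^2
def qc (t : ℤ) : ℤ := (40*t)^2
def qd (t : ℤ) : ℤ := (48*(t^2-1))^2

def quad (t : ℤ) : Finset ℤ := {qa t, qb t, qc t, qd t}

lemma h36 {t : ℤ} (ht : 6 ≤ t) : (36:ℤ) ≤ t^2 := by nlinarith

lemma quad_order {t : ℤ} (ht : 6 ≤ t) :
    0 < qc t ∧ qc t < qb t ∧ qb t < qa t ∧ qa t < qd t := by
  have h := h36 ht
  have htpos : (0:ℤ) < t := by linarith
  have ht1 : (0:ℤ) < t^2 - 1 := by nlinarith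
  have htt : (0:ℤ) < t * t := mul_pos htpos htpos
  have ht11 : (0:ℤ) < (t^2-1) * (t^2-1) := mul_pos ht1 ht1
  refine ⟨?_, ?_, ?_, ?_⟩ <;> simp only [qa, qb, qc, qd]
  · nlinarith [htt]
  · nlinarith [htt]
  · nlinarith [mul_le_mul_of_nonneg_left h (show (0:ℤ) ≤ 225*t^2 by nlinarith)]
  · nlinarith [ht11]

lemma equiv_imp {t t' : ℤ} (ht : 6 ≤ t) (ht' : 6 ≤ t')
    (h : EquivQuad (quad t) (quad t')) : t = t' := by
  obtain ⟨u, hu0, him⟩ := h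
  obtain ⟨hc0, hcb, hba, had⟩ := quad_order ht
  obtain ⟨hc0', hcb', hba', had'⟩ := quad_order ht'
  simp only [quad, Finset.coe_insert, Finset.coe_singleton,
    Set.image_insert_eq, Set.image_singleton] at him
  -- rational versions of the inequalities
  have qc0 : (0:ℚ) < (qc t : ℚ) := by exact_mod_cast hc0
  have qcb : ((qc t : ℚ)) < (qb t : ℚ) := by exact_mod_cast hcb
  have qba : ((qb t : ℚ)) < (qa t : ℚ) := by exact_mod_cast hba
  have qad : ((qa t : ℚ)) < (qd t : ℚ) := by exact_mod_cast had
  have qc0' : (0:ℚ) < (qc t' : ℚ) := by exact_mod_cast hc0'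
  have qcb' : ((qc t' : ℚ)) < (qb t' : ℚ) := by exact_mod_cast hcb'
  have qba' : ((qb t' : ℚ)) < (qa t' : ℚ) := by exact_mod_cast hba'
  have qad' : ((qa t' : ℚ)) < (qd t' : ℚ) := by exact_mod_cast had'
  -- u > 0
  have hcu_mem : ((qc t : ℚ)) * u ∈
      ({((qa t' : ℤ) : ℚ), ((qb t' : ℤ) : ℚ), ((qc t' : ℤ) : ℚ), ((qd t' : ℤ) : ℚ)} : Set ℚ) := by
    rw [← him]; simp
  have hupos : 0 < u := by
    have hpos : 0 < ((qc t : ℚ)) * u := by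
      rcases hcu_mem with h | h | h | h <;> rw [h] <;> linarith
    nlinarith
  -- max element: qd t * u = qd t'
  have hdu_mem : ((qd t : ℚ)) * u ∈
      ({((qa t' : ℤ) : ℚ), ((qb t' : ℤ) : ℚ), ((qc t' : ℤ) : ℚ), ((qd t' : ℤ) : ℚ)} : Set ℚ) := by
    rw [← him]; simp
  have hd'_mem : ((qd t' : ℤ) : ℚ) ∈
      ({((qa t : ℚ)) * u, ((qb t : ℚ)) * u, ((qc t : ℚ)) * u, ((qd t : ℚ)) * u} : Set ℚ) := by
    rw [him]; simp
  have hDu : ((qd t : ℚ)) * u = (qd t' : ℚ) := by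
    have h1 : ((qd t : ℚ)) * u ≤ (qd t' : ℚ) := by
      rcases hdu_mem with h | h | h | h <;> rw [h] <;> linarith
    have h2 : ((qd t' : ℚ)) ≤ (qd t : ℚ) * u := by
      rcases hd'_mem with h | h | h | h <;> rw [h] <;>
        exact mul_le_mul_of_nonneg_right (by linarith) (le_of_lt hupos)
    linarith
  -- min element: qc t * u = qc t'
  have hc'_mem : ((qc t' : ℤ) : ℚ) ∈
      ({((qa t : ℚ)) * u, ((qb t : ℚ)) * u, ((qc t : ℚ)) * u, ((qd t : ℚ)) * u} : Set ℚ) := by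
    rw [him]; simp
  have hCu : ((qc t : ℚ)) * u = (qc t' : ℚ) := by
    have h1 : ((qc t' : ℚ)) ≤ (qc t : ℚ) * u := by
      rcases hcu_mem with h | h | h | h <;> rw [h] <;> linarith
    have h2 : ((qc t : ℚ)) * u ≤ (qc t' : ℚ) := by
      rcases hc'_mem with h | h | h | h <;> rw [h] <;>
        exact mul_le_mul_of_nonneg_right (by linarith) (le_of_lt hupos)
    linarith
  -- cross ratio equation
  have hQ : ((qc t : ℚ)) * (qd t' : ℚ) = ((qc t' : ℚ)) * (qd t : ℚ) := by
    linear_combination (-((qc t : ℚ))) * hDu + ((qd t : ℚ)) * hCu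
  have hZ : qc t * qd t' = qc t' * qd t := by exact_mod_cast hQ
  simp only [qc, qd] at hZ
  have hX' : 3686400 * ((t*(t'^2-1) - t'*(t^2-1)) * (t*(t'^2-1) + t'*(t^2-1))) = 0 := by
    linear_combination hZ
  have hX : (t*(t'^2-1) - t'*(t^2-1)) * (t*(t'^2-1) + t'*(t^2-1)) = 0 := by linarith
  have h1 : (0:ℤ) < t*(t'^2-1) := by nlinarith [h36 ht, h36 ht']
  have h2 : (0:ℤ) < t'*(t^2-1) := by nlinarith [h36 ht, h36 ht']
  rcases mul_eq_zero.mp hX with h | h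
  · have h3 : (t' - t) * (t*t' + 1) = 0 := by linear_combination h
    rcases mul_eq_zero.mp h3 with h4 | h4
    · linarith
    · nlinarith [mul_pos (show (0:ℤ) < t by linarith) (show (0:ℤ) < t' by linarith)]
  · linarith

theorem stmt_14 :
    ∃ S : Set (Finset ℤ), S.Infinite ∧
      (∀ s ∈ S, ∃ a b c d n₂ : ℤ,
        s = {a, b, c, d} ∧
        (∃ x : ℤ, a = x^2) ∧ (∃ x : ℤ, b = x^2) ∧ (∃ x : ℤ, c = x^2) ∧
        (∃ x : ℤ, d = x^2) ∧
        a ≠ b ∧ a ≠ c ∧ a ≠ d ∧ b ≠ c ∧ b ≠ d ∧ c ≠ d ∧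
        a ≠ 0 ∧ b ≠ 0 ∧ c ≠ 0 ∧ d ≠ 0 ∧
        (∃ x : ℤ, a*b = x^2) ∧ (∃ x : ℤ, a*c = x^2) ∧ (∃ x : ℤ, a*d = x^2) ∧
        (∃ x : ℤ, b*c = x^2) ∧ (∃ x : ℤ, b*d = x^2) ∧ (∃ x : ℤ, c*d = x^2) ∧
        n₂ ≠ 0 ∧ IsDQuadruple a b c d n₂) ∧
      (∀ s ∈ S, ∀ t ∈ S, s ≠ t → ¬ EquivQuad s t) := by
  refine ⟨Set.range (fun k : ℕ => quad ((k : ℤ) + 6)), ?_, ?_, ?_⟩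
  · apply Set.infinite_range_of_injective
    intro k k' hkk
    have h6 : (6:ℤ) ≤ (k:ℤ) + 6 := by omega
    have h6' : (6:ℤ) ≤ (k':ℤ) + 6 := by omega
    have : ((k:ℤ) + 6) = ((k':ℤ) + 6) := by
      apply equiv_imp h6 h6'
      have hkk' : quad ((k:ℤ)+6) = quad ((k':ℤ)+6) := hkk
      exact ⟨1, one_ne_zero, by rw [hkk']; simp⟩
    omega
  · rintro s ⟨k, rfl⟩
    set t : ℤ := (k : ℤ) + 6 with htdef
    have ht : 6 ≤ t := by omega
    obtain ⟨hc0, hcb, hba, had⟩ := quad_order ht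
    have htpos : (0:ℤ) < t := by linarith
    have ht1 : (0:ℤ) < t^2 - 1 := by nlinarith
    refine ⟨qa t, qb t, qc t, qd t, (1440*t*(t^2-1))^2, rfl,
      ⟨15*(t^2-1), rfl⟩, ⟨72*t, rfl⟩, ⟨40*t, rfl⟩, ⟨48*(t^2-1), rfl⟩,
      (by linarith), (by linarith), (by linarith), (by linarith), (by linarith),
      (by linarith), (by linarith), (by linarith), (by linarith), (by linarith),
      ⟨1080*t*(t^2-1), by simp only [qa, qb]; ring⟩,
      ⟨600*t*(t^2-1), by simp only [qa, qc]; ring⟩,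
      ⟨720*(t^2-1)^2, by simp only [qa, qd]; ring⟩,
      ⟨2880*t^2, by simp only [qb, qc]; ring⟩,
      ⟨3456*t*(t^2-1), by simp only [qb, qd]; ring⟩,
      ⟨1920*t*(t^2-1), by simp only [qc, qd]; ring⟩,
      ?_, ?_⟩
    · positivity
    · refine ⟨(by linarith), (by linarith), (by linarith), (by linarith), (by linarith),
        (by linarith), (by linarith), (by linarith), (by linarith), (by linarith),
        ⟨1800*t*(t^2-1), by simp only [qa, qb]; ring⟩,
        ⟨1560*t*(t^2-1), by simp only [qa, qc]; ring⟩,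
        ⟨720*(t^2-1)*(t^2+1), by simp only [qa, qd]; ring⟩,
        ⟨1440*t*(t^2+1), by simp only [qb, qc]; ring⟩,
        ⟨3744*t*(t^2-1), by simp only [qb, qd]; ring⟩,
        ⟨2400*t*(t^2-1), by simp only [qc, qd]; ring⟩⟩
  · rintro s ⟨k, rfl⟩ s' ⟨k', rfl⟩ hne hE
    have h6 : (6:ℤ) ≤ (k:ℤ) + 6 := by omega
    have h6' : (6:ℤ) ≤ (k':ℤ) + 6 := by omega
    have := equiv_imp h6 h6' hE
    exact hne (by show quad _ = quad _; rw [this])
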